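/- arXiv:0712.2112 — 2 statements merged into one kernel-verified Lean document; each statement's English description precedes it below -/
import Mathlib

section
/- A set E ⊆ ℝ is a pseudo-Dirichlet set if and only if E is contained in the subgroup of (ℝ,+) generated by some Dirichlet set. -/
/-! If `D` is Dirichlet along `(n_k)`, then every `x` in the group generated by `D` satisfies
`‖n_k x‖ ≤ C 2^{-k}` for some `C`, so `E` is pseudo-Dirichlet along `(n_{2k})`.

Conversely, pass to a lacunary subsequence `m_k = n_{φ k}` with `2^{k+2} m_k ≤ m_{k+1}` and let
`D = {v | ‖m_k v‖ ≤ 2^{-k} for all k}`. Lacunarity lets one prescribe `m_k v` modulo `1` up to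
`2^{-k-2}` at all levels simultaneously (nested intervals), so every `r` can be corrected by some
`v ∈ D` that lowers each `‖m_k r‖` by `2^{-k-2}` until it is at most `2^{-k-1}`. For `x ∈ E`
only finitely many levels start above `2^{-k-1}`, so after finitely many corrections the remainder
itself lies in `D`. -/

open MeasureTheory Filter Set

/-- Distance from a real number to the nearest integer. -/
noncomputable def nintDist (x : ℝ) : ℝ := |x - round x|

/-- `E` is a Dirichlet set. -/
def IsDirichlet (E : Set ℝ) : Prop :=
  ∃ n : ℕ → ℕ, StrictMono n ∧ ∀ x ∈ E, ∀ k : ℕ, nintDist (n k * x) ≤ (1/2) ^ k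

/-- `E` is a pseudo-Dirichlet set. -/
def IsPseudoDirichlet (E : Set ℝ) : Prop :=
  ∃ n : ℕ → ℕ, StrictMono n ∧ ∀ x ∈ E, ∀ᶠ k in atTop, nintDist (n k * x) ≤ (1/2) ^ k

/-- `E` is an Arbault set. -/
def IsArbault (E : Set ℝ) : Prop :=
  ∃ n : ℕ → ℕ, StrictMono n ∧ ∀ x ∈ E,
    Tendsto (fun k => nintDist (n k * x)) atTop (nhds 0)

/-- `E` is an N-set. -/
def IsNSet (E : Set ℝ) : Prop :=
  ∃ a : ℕ → ℝ, (∀ n, 0 ≤ a n) ∧ ¬ Summable a ∧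
    ∀ x ∈ E, Summable (fun n => a n * nintDist (n * x))

/-- `s` is an Fσ set: a countable union of closed sets. -/
def IsFsigma (s : Set ℝ) : Prop :=
  ∃ f : ℕ → Set ℝ, (∀ n, IsClosed (f n)) ∧ s = ⋃ n, f n

open Asymptotics

lemma nintDist_nonneg (x : ℝ) : 0 ≤ nintDist x := abs_nonneg _

lemma nintDist_le_abs_sub_intCast (x : ℝ) (z : ℤ) : nintDist x ≤ |x - z| := round_le x z

lemma nintDist_le_abs (x : ℝ) : nintDist x ≤ |x| := by
  simpa using nintDist_le_abs_sub_intCast x 0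

lemma nintDist_le_half (x : ℝ) : nintDist x ≤ 1 / 2 := abs_sub_round x

lemma nintDist_add_intCast (x : ℝ) (z : ℤ) : nintDist (x + z) = nintDist x := by
  simp only [nintDist, round_add_intCast, Int.cast_add, add_sub_add_right_eq_sub]

lemma nintDist_neg (x : ℝ) : nintDist (-x) = nintDist x := by
  have h (y : ℝ) : nintDist (-y) ≤ nintDist y := by
    calc nintDist (-y) ≤ |-y - ((-round y : ℤ) : ℝ)| := nintDist_le_abs_sub_intCast _ _
      _ = nintDist y := by rw [nintDist, ← abs_neg]; push_cast; ring_nf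
  exact (h x).antisymm (by simpa using h (-x))

lemma nintDist_add_le (x y : ℝ) : nintDist (x + y) ≤ nintDist x + nintDist y := by
  calc nintDist (x + y) ≤ |(x - round x) + (y - round y)| := by
        simpa [add_sub_add_comm] using nintDist_le_abs_sub_intCast (x + y) (round x + round y)
    _ ≤ nintDist x + nintDist y := abs_add_le _ _

lemma nintDist_sub_le (x y : ℝ) : nintDist (x - y) ≤ nintDist x + nintDist y := by
  simpa [sub_eq_add_neg, nintDist_neg] using nintDist_add_le x (-y)

def nintDistBigOSubgroup {ι : Type*} (l : Filter ι) (t b : ι → ℝ) : AddSubgroup ℝ where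
  carrier := {x | (fun i => nintDist (t i * x)) =O[l] b}
  add_mem' {x y} hx hy := by
    refine IsBigO.trans (isBigO_of_le l fun i => ?_) (hx.add hy)
    simp only [Real.norm_eq_abs, abs_of_nonneg (nintDist_nonneg _), mul_add]
    exact (nintDist_add_le _ _).trans (le_abs_self _)
  zero_mem' := by simp [nintDist, isBigO_zero]
  neg_mem' {x} hx := by simpa [nintDist_neg] using hx

lemma isPseudoDirichlet_of_subset_closure {D E : Set ℝ} (hD : IsDirichlet D)
    (hE : E ⊆ AddSubgroup.closure D) : IsPseudoDirichlet E := by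
  obtain ⟨n, hn, hDn⟩ := hD
  have hclosure : AddSubgroup.closure D ≤
      nintDistBigOSubgroup atTop (fun k => n k) (fun k => (1 / 2) ^ k) :=
    (AddSubgroup.closure_le _).2 fun x hx => isBigO_of_le _ fun k => by
      simpa [abs_of_nonneg (nintDist_nonneg _)] using hDn x hx k
  refine ⟨fun k => n (2 * k), hn.comp (strictMono_mul_left_of_pos two_pos), fun x hx => ?_⟩
  have hO : (fun k => nintDist (n (2 * k) * x)) =O[atTop] fun k => ((1 / 2 : ℝ) ^ 2) ^ k := by
    simpa [Function.comp_def, pow_mul] using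
      (hclosure (hE hx)).comp_tendsto (tendsto_id.const_mul_atTop' two_pos)
  have ho := hO.trans_isLittleO (isLittleO_pow_pow_of_lt_left (by norm_num) (by norm_num :
    (1 / 2 : ℝ) ^ 2 < 1 / 2))
  filter_upwards [ho.bound one_pos] with k hk
  simpa [abs_of_nonneg (nintDist_nonneg _)] using hk

lemma exists_abs_le_abs_sub_le (θ : ℝ) {b : ℝ} (hb : 0 ≤ b) :
    ∃ c, |c| ≤ b ∧ |θ - c| ≤ max 0 (|θ| - b) := by
  refine ⟨max (-b) (min b θ),
    abs_le.2 ⟨le_max_left _ _, max_le (by linarith) (min_le_left _ _)⟩, ?_⟩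
  rcases le_total θ (-b) with hθb | hθb
  · rw [min_eq_right (by linarith), max_eq_left hθb, abs_of_nonpos (by linarith),
      abs_of_nonpos (by linarith)]
    exact le_max_of_le_right (by linarith)
  rcases le_total θ b with hθb' | hθb'
  · rw [min_eq_right hθb', max_eq_right hθb, sub_self, abs_zero]
    exact le_max_left _ _
  · rw [min_eq_left hθb', max_eq_right (by linarith), abs_of_nonneg (by linarith),
      abs_of_nonneg (by linarith)]
    exact le_max_right _ _

lemma exists_Icc_nintDist_mul_sub_le {M : ℝ} (hM : 0 < M) (c ε u : ℝ) :
    ∃ w, u ≤ w ∧ w + 2 * ε / M ≤ u + (1 + 2 * ε) / M ∧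
      ∀ v ∈ Icc w (w + 2 * ε / M), nintDist (M * v - c) ≤ ε := by
  set z := ⌈M * u - c + ε⌉
  refine ⟨(z + c - ε) / M, ?_, ?_, fun v hv => ?_⟩
  · rw [le_div_iff₀ hM]
    linarith [Int.le_ceil (M * u - c + ε)]
  · rw [← add_div, div_le_iff₀ hM, add_mul, div_mul_cancel₀ _ hM.ne']
    linarith [Int.ceil_lt_add_one (M * u - c + ε)]
  · rw [← add_div, mem_Icc, div_le_iff₀' hM, le_div_iff₀' hM] at hv
    refine (nintDist_le_abs_sub_intCast _ z).trans (abs_le.2 ⟨?_, ?_⟩) <;>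
      linarith [hv.1, hv.2]

lemma exists_forall_nintDist_mul_sub_le {M ε : ℕ → ℝ} (hM : ∀ k, 0 < M k)
    (hε : ∀ k, ε k ≤ 1 / 2) (hgap : ∀ k, M k ≤ ε k * M (k + 1)) (c : ℕ → ℝ) :
    ∃ v, ∀ k, nintDist (M k * v - c k) ≤ ε k := by
  choose w hw_left hw_right hw_mem using
    fun k => exists_Icc_nintDist_mul_sub_le (hM k) (c k) (ε k)
  let u : ℕ → ℝ := fun k => Nat.rec (w 0 0) (fun k uk => w (k + 1) uk) k
  let I : ℕ → Set ℝ := fun k => Icc (u k) (u k + 2 * ε k / M k)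
  have hI_mem (k : ℕ) : ∀ v ∈ I k, nintDist (M k * v - c k) ≤ ε k := by
    cases k <;> exact hw_mem _ _
  have hε_pos (k : ℕ) : 0 < ε k := pos_of_mul_pos_left ((hM k).trans_le (hgap k)) (hM _).le
  have hlength (k : ℕ) : (1 + 2 * ε (k + 1)) / M (k + 1) ≤ 2 * ε k / M k := by
    rw [div_le_div_iff₀ (hM _) (hM _)]
    nlinarith [hgap k, hε (k + 1), hM k]
  have hI_anti (k : ℕ) : I (k + 1) ⊆ I k :=
    Icc_subset_Icc (hw_left _ _) ((hw_right _ _).trans ((add_le_add_iff_left _).2 (hlength k)))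
  have hI_ne (k : ℕ) : (I k).Nonempty :=
    nonempty_Icc.2 (le_add_of_nonneg_right (div_nonneg (by linarith [hε_pos k]) (hM k).le))
  obtain ⟨v, hv⟩ := IsCompact.nonempty_iInter_of_sequence_nonempty_isCompact_isClosed I hI_anti
    hI_ne isCompact_Icc fun _ => isClosed_Icc
  exact ⟨v, fun k => hI_mem k v (mem_iInter.1 hv k)⟩

def dirichletSet (m : ℕ → ℕ) : Set ℝ := {x | ∀ k, nintDist (m k * x) ≤ (1 / 2) ^ k}

lemma isDirichlet_dirichletSet {m : ℕ → ℕ} (hm : StrictMono m) : IsDirichlet (dirichletSet m) :=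
  ⟨m, hm, fun _ hx => hx⟩

lemma StrictMono.exists_lacunary_subseq {n : ℕ → ℕ} (hn : StrictMono n) :
    ∃ φ : ℕ → ℕ, (∀ k, k < φ k) ∧ ∀ k, 2 ^ (k + 2) * n (φ k) ≤ n (φ (k + 1)) := by
  let φ : ℕ → ℕ := fun k => Nat.rec 1 (fun k p => 2 ^ (k + 2) * n p + k + 2) k
  refine ⟨φ, fun k => ?_, fun k => ?_⟩
  · cases k with
    | zero => exact Nat.one_pos
    | succ k => show k + 1 < 2 ^ (k + 2) * n (φ k) + k + 2; omega
  · exact (show 2 ^ (k + 2) * n (φ k) ≤ φ (k + 1) by simp only [φ]; omega).trans hn.le_apply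

section Lacunary

variable {m : ℕ → ℕ} (hm : ∀ k, 0 < m k) (hgap : ∀ k, 2 ^ (k + 2) * m k ≤ m (k + 1))
include hm hgap

lemma strictMono_of_pow_mul_le : StrictMono m :=
  strictMono_nat_of_lt_succ fun k =>
    (lt_mul_left (hm k) (Nat.one_lt_two_pow (by omega))).trans_le (hgap k)

lemma exists_mem_dirichletSet_nintDist_sub_le (r : ℝ) : ∃ v ∈ dirichletSet m, ∀ k,
    nintDist (m k * (r - v)) ≤
      max ((1 / 2) ^ (k + 1)) (nintDist (m k * r) - (1 / 2) ^ (k + 2)) := by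
  choose c hc_abs hc_sub using fun k =>
    exists_abs_le_abs_sub_le (m k * r - round ((m k : ℝ) * r)) (b := (1 / 2 : ℝ) ^ (k + 1))
      (by positivity)
  have hhalf (k : ℕ) : (0 : ℝ) < (1 / 2) ^ k := by positivity
  have hgap' (k : ℕ) : (m k : ℝ) ≤ (1 / 2) ^ (k + 2) * m (k + 1) := by
    have h := (Nat.cast_le (α := ℝ)).2 (hgap k)
    push_cast at h
    rw [one_div, inv_pow, ← div_eq_inv_mul, le_div_iff₀ (by positivity)]
    linarith
  obtain ⟨v, hv⟩ := exists_forall_nintDist_mul_sub_le (fun k => Nat.cast_pos.2 (hm k))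
    (fun k => pow_le_of_le_one (by norm_num) (by norm_num) (by omega)) hgap' c
  refine ⟨v, fun k => ?_, fun k => ?_⟩
  · calc nintDist (m k * v) = nintDist ((m k * v - c k) + c k) := by ring_nf
      _ ≤ (1 / 2) ^ (k + 2) + (1 / 2) ^ (k + 1) :=
        (nintDist_add_le _ _).trans (add_le_add (hv k) ((nintDist_le_abs _).trans (hc_abs k)))
      _ ≤ (1 / 2) ^ k := by rw [pow_succ, pow_succ]; nlinarith [hhalf k]
  · set q : ℝ := (1 / 2) ^ (k + 2)
    have hq : (1 / 2 : ℝ) ^ (k + 1) = 2 * q := by simp only [q, pow_succ]; ring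
    calc nintDist (m k * (r - v))
        = nintDist ((m k * r - round ((m k : ℝ) * r) - c k) - (m k * v - c k)) := by
          rw [← nintDist_add_intCast _ (-round ((m k : ℝ) * r))]; push_cast; ring_nf
      _ ≤ max 0 (nintDist (m k * r) - 2 * q) + q :=
        (nintDist_sub_le _ _).trans
          (add_le_add ((nintDist_le_abs _).trans (hq ▸ hc_sub k)) (hv k))
      _ ≤ max (2 * q) (nintDist (m k * r) - q) := by
        rcases le_total 0 (nintDist (m k * r) - 2 * q) with h | h
        · rw [max_eq_right h]; exact le_max_of_le_right (by linarith)
        · rw [max_eq_left h]; exact le_max_of_le_left (by linarith [hhalf (k + 2)])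
      _ = _ := by rw [hq]

lemma exists_sub_mem_closure_nintDist_le (i : ℕ) (r : ℝ) :
    ∃ s, r - s ∈ AddSubgroup.closure (dirichletSet m) ∧ ∀ k, nintDist (m k * s) ≤
      max ((1 / 2) ^ (k + 1)) (nintDist (m k * r) - i * (1 / 2) ^ (k + 2)) := by
  induction i generalizing r with
  | zero => exact ⟨r, by simp [zero_mem], fun k => by simp⟩
  | succ i ih =>
    obtain ⟨v, hv, hrv⟩ := exists_mem_dirichletSet_nintDist_sub_le hm hgap r
    obtain ⟨s, hs, hsk⟩ := ih (r - v)
    refine ⟨s, ?_, fun k => (hsk k).trans (max_le (le_max_left _ _) ?_)⟩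
    · simpa [sub_right_comm r v s] using add_mem hs (AddSubgroup.subset_closure hv)
    · have hi : 0 ≤ (i : ℝ) * (1 / 2) ^ (k + 2) := by positivity
      push_cast
      rcases le_max_iff.1 (hrv k) with h | h
      · exact le_max_of_le_left (by linarith)
      · exact le_max_of_le_right (by linarith)

lemma mem_closure_dirichletSet {x : ℝ} {K : ℕ}
    (hx : ∀ k ≥ K, nintDist (m k * x) ≤ (1 / 2) ^ (k + 1)) :
    x ∈ AddSubgroup.closure (dirichletSet m) := by
  -- `2 ^ (K + 1)` steps of size `2^{-k-2}` use up the initial `1/2` at every level `k < K`.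
  obtain ⟨s, hs, hsk⟩ := exists_sub_mem_closure_nintDist_le hm hgap (2 ^ (K + 1)) x
  have hs_small (k : ℕ) : nintDist (m k * x) - (2 ^ (K + 1) : ℕ) * (1 / 2) ^ (k + 2) ≤
      (1 / 2) ^ (k + 1) := by
    rcases le_or_gt K k with hk | hk
    · have := hx k hk
      nlinarith [pow_pos (by norm_num : (0:ℝ) < 1 / 2) (k + 2)]
    · have hpow : (1 : ℝ) ≤ (2 ^ (K + 1) : ℕ) * (1 / 2) ^ (k + 2) :=
        calc (1 : ℝ) = 2 ^ (k + 2) * (1 / 2) ^ (k + 2) := by rw [← mul_pow]; norm_num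
          _ ≤ (2 ^ (K + 1) : ℕ) * (1 / 2) ^ (k + 2) := by
            push_cast
            exact mul_le_mul_of_nonneg_right (pow_le_pow_right₀ (by norm_num) (by omega))
              (by positivity)
      linarith [nintDist_le_half (m k * x), pow_pos (by norm_num : (0:ℝ) < 1 / 2) (k + 1)]
  have hsD : s ∈ dirichletSet m := fun k =>
    ((hsk k).trans (max_le le_rfl (hs_small k))).trans
      (pow_le_pow_of_le_one (by norm_num) (by norm_num) (by omega))
  simpa using add_mem hs (AddSubgroup.subset_closure hsD)

end Lacunary

theorem stmt8 (E : Set ℝ) :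
    IsPseudoDirichlet E ↔
      ∃ D : Set ℝ, IsDirichlet D ∧ E ⊆ (AddSubgroup.closure D : Set ℝ) := by
  refine ⟨fun ⟨n, hn, hE⟩ => ?_,
    fun ⟨D, hD, hED⟩ => isPseudoDirichlet_of_subset_closure hD hED⟩
  obtain ⟨φ, hφ, hgap⟩ := hn.exists_lacunary_subseq
  have hpos (k : ℕ) : 0 < n (φ k) := (Nat.zero_le k).trans_lt ((hφ k).trans_le hn.le_apply)
  refine ⟨dirichletSet (n ∘ φ), isDirichlet_dirichletSet (strictMono_of_pow_mul_le hpos hgap),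
    fun x hx => ?_⟩
  obtain ⟨K, hK⟩ := eventually_atTop.1 (hE x hx)
  exact mem_closure_dirichletSet hpos hgap fun k hk =>
    (hK _ (hk.trans (hφ k).le)).trans (pow_le_pow_of_le_one (by norm_num) (by norm_num) (hφ k))
end

section
/- For every Arbault set E ⊆ ℝ there exists an F_σ set F ⊇ E such that E + F ≠ ℝ. Concretely, if (n_k) witnesses that E is an Arbault set, then F = {x : ‖n_k·x‖ ≤ 1/8 for all but finitely many k} is F_σ, contains E, and F + F ≠ ℝ. -/
open MeasureTheory Filter Set Pointwise

/-!
Write `F_ε = {x | ‖n_k x‖ ≤ ε for all large k}`. It is the union over `N` of the closed sets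
`⋂_{k ≥ N} {x | ‖n_k x‖ ≤ ε}`, and `E ⊆ F_{1/8}` since `‖n_k x‖ → 0` on `E`. By the triangle
inequality for `‖·‖`, `F_{1/8} + F_{1/8} ⊆ F_{1/4}`. On the other hand `F_{1/4}` has Lebesgue
measure at most `1/2` modulo `1`: for `n_k ≠ 0` the map `y ↦ n_k y` preserves Haar measure on
`ℝ/ℤ`, so each set `{y | ‖n_k y‖ ≤ 1/4}` has measure `1/2`, and these bounds pass to the
increasing union defining `F_{1/4}`. Hence `F_{1/4} ≠ ℝ`, and a fortiori `E + F_{1/8} ≠ ℝ`.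
-/

theorem setOf_eventually_atTop_mem {α : Type*} (s : ℕ → Set α) :
    {x | ∀ᶠ k in atTop, x ∈ s k} = ⋃ N, ⋂ k ≥ N, s k := by
  ext x
  simp only [mem_ofPred_eq, eventually_atTop, mem_iUnion, mem_iInter]

theorem isFsigma_setOf_eventually_atTop_mem {s : ℕ → Set ℝ} (hs : ∀ k, IsClosed (s k)) :
    IsFsigma {x | ∀ᶠ k in atTop, x ∈ s k} :=
  ⟨_, fun _ => isClosed_biInter fun k _ => hs k, setOf_eventually_atTop_mem s⟩

theorem measure_setOf_eventually_atTop_mem_le {α : Type*} [MeasurableSpace α] (μ : Measure α)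
    {s : ℕ → Set α} {c : ENNReal} (hc : ∀ᶠ k in atTop, μ (s k) ≤ c) :
    μ {x | ∀ᶠ k in atTop, x ∈ s k} ≤ c := by
  obtain ⟨K, hK⟩ := eventually_atTop.1 hc
  have hmono : Monotone fun N => ⋂ k ≥ N, s k :=
    fun N M hNM => biInter_mono (fun k hk => hNM.trans hk) fun _ _ => subset_rfl
  rw [setOf_eventually_atTop_mem, hmono.measure_iUnion]
  refine iSup_le fun N => ?_
  calc μ (⋂ k ≥ N, s k) ≤ μ (s (max N K)) := measure_mono (biInter_subset_of_mem (le_max_left N K))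
    _ ≤ c := hK _ (le_max_right _ _)

theorem volume_setOf_eventually_norm_zsmul_le (m : ℕ → ℤ) (hm : ∀ᶠ k in atTop, m k ≠ 0)
    (ε : ℝ) :
    volume {y : UnitAddCircle | ∀ᶠ k in atTop, ‖m k • y‖ ≤ ε} ≤ ENNReal.ofReal (2 * ε) := by
  have hset : {y : UnitAddCircle | ∀ᶠ k in atTop, ‖m k • y‖ ≤ ε} =
      {y | ∀ᶠ k in atTop, y ∈ (m k • ·) ⁻¹' Metric.closedBall 0 ε} := by
    simp only [mem_preimage, mem_closedBall_zero_iff]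
  rw [hset]
  refine measure_setOf_eventually_atTop_mem_le volume ?_
  filter_upwards [hm] with k hk
  rw [(Measure.measurePreserving_zsmul volume hk).measure_preimage
    measurableSet_closedBall.nullMeasurableSet, AddCircle.volume_closedBall]
  exact ENNReal.ofReal_le_ofReal (min_le_right _ _)

theorem nintDist_eq_norm (x : ℝ) : nintDist x = ‖(x : UnitAddCircle)‖ :=
  UnitAddCircle.norm_eq.symm

theorem continuous_nintDist : Continuous nintDist := by
  rw [funext nintDist_eq_norm]
  exact continuous_norm.comp (AddCircle.continuous_mk' 1)

theorem nintDist_add_le_s10 (a b : ℝ) : nintDist (a + b) ≤ nintDist a + nintDist b := by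
  simpa only [nintDist_eq_norm, AddCircle.coe_add] using norm_add_le (a : UnitAddCircle) b

theorem nintDist_natCast_mul (m : ℕ) (x : ℝ) :
    nintDist (m * x) = ‖(m : ℤ) • (x : UnitAddCircle)‖ := by
  rw [nintDist_eq_norm, ← AddCircle.coe_zsmul, zsmul_eq_mul, Int.cast_natCast]

theorem isFsigma_setOf_eventually_nintDist_mul_le (a : ℕ → ℝ) (ε : ℝ) :
    IsFsigma {x : ℝ | ∀ᶠ k in atTop, nintDist (a k * x) ≤ ε} :=
  isFsigma_setOf_eventually_atTop_mem (s := fun k => {x | nintDist (a k * x) ≤ ε})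
    fun k => isClosed_le (continuous_nintDist.comp (continuous_const_mul (a k))) continuous_const

theorem add_subset_setOf_eventually_nintDist_mul_le (a : ℕ → ℝ) (ε δ : ℝ) :
    {x : ℝ | ∀ᶠ k in atTop, nintDist (a k * x) ≤ ε} +
        {x : ℝ | ∀ᶠ k in atTop, nintDist (a k * x) ≤ δ} ⊆
      {x : ℝ | ∀ᶠ k in atTop, nintDist (a k * x) ≤ ε + δ} := by
  rintro _ ⟨x, hx, y, hy, rfl⟩
  filter_upwards [hx, hy] with k hxk hyk
  rw [mul_add]
  exact (nintDist_add_le_s10 _ _).trans (add_le_add hxk hyk)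

theorem exists_frequently_lt_nintDist_natCast_mul (n : ℕ → ℕ) (hn : ∀ᶠ k in atTop, n k ≠ 0)
    {ε : ℝ} (hε : ε < 1 / 2) :
    ∃ z : ℝ, ∃ᶠ k in atTop, ε < nintDist (n k * z) := by
  by_contra! h
  have huniv : {y : UnitAddCircle | ∀ᶠ k in atTop, ‖(n k : ℤ) • y‖ ≤ ε} = univ := by
    refine eq_univ_of_forall fun y => ?_
    induction y using QuotientAddGroup.induction_on with
    | H z => simpa only [mem_ofPred_eq, nintDist_natCast_mul] using h z
  have hvol := volume_setOf_eventually_norm_zsmul_le _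
    (hn.mono fun k hk => Int.natCast_ne_zero.2 hk) ε
  rw [huniv, UnitAddCircle.measure_univ, ENNReal.one_le_ofReal] at hvol
  linarith

theorem stmt10 (E : Set ℝ) (n : ℕ → ℕ) (hn : StrictMono n)
    (hE : ∀ x ∈ E, Tendsto (fun k => nintDist (n k * x)) atTop (nhds 0)) :
    IsFsigma {x : ℝ | ∀ᶠ k in atTop, nintDist (n k * x) ≤ 1/8} ∧
    E ⊆ {x : ℝ | ∀ᶠ k in atTop, nintDist (n k * x) ≤ 1/8} ∧
    {x : ℝ | ∀ᶠ k in atTop, nintDist (n k * x) ≤ 1/8} +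
      {x : ℝ | ∀ᶠ k in atTop, nintDist (n k * x) ≤ 1/8} ≠ Set.univ ∧
    E + {x : ℝ | ∀ᶠ k in atTop, nintDist (n k * x) ≤ 1/8} ≠ Set.univ := by
  set F : Set ℝ := {x : ℝ | ∀ᶠ k in atTop, nintDist (n k * x) ≤ 1/8}
  have hEF : E ⊆ F := fun x hx => (hE x hx).eventually (eventually_le_nhds (by norm_num))
  have hFF : F + F ≠ univ := by
    obtain ⟨z, hz⟩ := exists_frequently_lt_nintDist_natCast_mul n
      (hn.tendsto_atTop.eventually_ne_atTop 0) (ε := 1 / 4) (by norm_num)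
    intro h
    have hzF := add_subset_setOf_eventually_nintDist_mul_le (fun k => (n k : ℝ)) _ _
      (h ▸ mem_univ z)
    obtain ⟨k, hlt, hle⟩ := (hz.and_eventually hzF).exists
    norm_num at hle
    linarith
  refine ⟨isFsigma_setOf_eventually_nintDist_mul_le (fun k => (n k : ℝ)) _, hEF, hFF, ?_⟩
  exact fun h => hFF (eq_univ_of_univ_subset (h ▸ add_subset_add_right hEF))
end
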